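/- Let G = (V,E) be a finite simple graph, W ⊆ V a subset of vertices, and u ∈ W a vertex such that every edge of G with one endpoint in W and the other in V∖W is incident to u. Then the reduced density operator Tr_{V∖W} ( |G⟩⟨G| ) on ⨂_{w∈W} ℂ² has rank at most 2; its support is contained in the two-dimensional span of |0⟩^{(u)} ⊗ |G[W∖{u}]⟩ and |1⟩^{(u)} ⊗ (⨂_{b∈N_u∩W} Z^{(b)}) |G[W∖{u}]⟩, where G[W∖{u}] is the induced subgraph of G on W∖{u}. -/

import Mathlib

open scoped BigOperators

noncomputable section

/-- The state space of a collection of qubits indexed by `V`: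
amplitudes on computational-basis configurations `V → Bool`. -/
abbrev QState (V : Type*) := (V → Bool) → ℂ

variable {V : Type*}

/-- The inner product `⟨ψ|φ⟩`. -/
def qInner [Fintype V] [DecidableEq V] (ψ φ : QState V) : ℂ :=
  ∑ x, starRingEnd ℂ (ψ x) * φ x

/-- Pauli `X` acting on qubit `a`. -/
def pauliX [DecidableEq V] (a : V) (ψ : QState V) : QState V :=
  fun x => ψ (Function.update x a (!x a))

/-- Pauli `Z` acting on qubit `a`. -/
def pauliZ (a : V) (ψ : QState V) : QState V :=
  fun x => (if x a then (-1 : ℂ) else 1) * ψ x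

/-- Pauli `Y` acting on qubit `a`. -/
def pauliY [DecidableEq V] (a : V) (ψ : QState V) : QState V :=
  fun x => (if x a then Complex.I else -Complex.I) * ψ (Function.update x a (!x a))

/-- The tensor product `⨂_{b ∈ s} Z^{(b)}` of Pauli `Z` over the qubits in `s`. -/
def pauliZProd (s : Finset V) (ψ : QState V) : QState V :=
  fun x => (∏ b ∈ s, if x b then (-1 : ℂ) else 1) * ψ x

/-- A tensor product over the qubits in `s` of the diagonal single-qubit gate
`diag (f false, f true)`. -/
def diagProd (s : Finset V) (f : Bool → ℂ) (ψ : QState V) : QState V :=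
  fun x => (∏ b ∈ s, f (x b)) * ψ x

/-- The sign `(-1)^{x u · x v}` contributed by an edge `{u, v}`. -/
def edgeSign (x : V → Bool) : Sym2 V → ℂ :=
  Sym2.lift ⟨fun a b => if x a && x b then (-1 : ℂ) else 1,
    fun a b => by simp [Bool.and_comm]⟩

/-- The graph state `|G⟩ = (∏_{{u,v}∈E} CZ^{(uv)}) ⨂_v |+⟩^{(v)}` of a finite simple graph,
written out in amplitudes. -/
def graphState [Fintype V] [DecidableEq V] (G : SimpleGraph V) [DecidableRel G.Adj] :
    QState V :=
  fun x => ((Real.sqrt 2 : ℝ) : ℂ)⁻¹ ^ (Fintype.card V) * ∏ e ∈ G.edgeFinset, edgeSign x e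

/-- Local complementation `τ_a(G)` of a graph `G` at the vertex `a`: complement the
adjacency among the neighbors of `a`, leaving all other adjacencies unchanged. -/
def localComp (G : SimpleGraph V) (a : V) : SimpleGraph V where
  Adj u v :=
    (G.Adj a u ∧ G.Adj a v ∧ u ≠ v ∧ ¬ G.Adj u v) ∨
      ((¬ (G.Adj a u ∧ G.Adj a v)) ∧ G.Adj u v)
  symm := by
    constructor
    intro u v h
    rcases h with ⟨h1, h2, h3, h4⟩ | ⟨h1, h2⟩
    · exact Or.inl ⟨h2, h1, h3.symm, fun h => h4 (G.adj_symm h)⟩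
    · exact Or.inr ⟨fun h => h1 ⟨h.2, h.1⟩, G.adj_symm h2⟩
  loopless := by
    constructor
    intro u h
    rcases h with ⟨_, _, h3, _⟩ | ⟨_, h2⟩
    · exact h3 rfl
    · exact G.irrefl h2

instance [DecidableEq V] (G : SimpleGraph V) [DecidableRel G.Adj] (a : V) :
    DecidableRel (localComp G a).Adj := fun u v =>
  inferInstanceAs (Decidable
    ((G.Adj a u ∧ G.Adj a v ∧ u ≠ v ∧ ¬ G.Adj u v) ∨
      ((¬ (G.Adj a u ∧ G.Adj a v)) ∧ G.Adj u v)))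

/-- The induced subgraph of `G` on the vertices satisfying `P`. -/
def inducedSub (G : SimpleGraph V) (P : V → Prop) : SimpleGraph {v : V // P v} :=
  SimpleGraph.comap Subtype.val G

instance (G : SimpleGraph V) [DecidableRel G.Adj] (P : V → Prop) :
    DecidableRel (inducedSub G P).Adj := fun u v =>
  inferInstanceAs (Decidable (G.Adj u.1 v.1))

/-- The eigenvectors `|Z,+⟩ = |0⟩`, `|Z,-⟩ = |1⟩` of Pauli `Z`
(`s = false` the `+1`-eigenvector, `s = true` the `-1`-eigenvector). -/
def zVec (s : Bool) : Bool → ℂ := fun c => if c = s then 1 else 0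

/-- The eigenvectors `|X,±⟩ = (|0⟩ ± |1⟩)/√2` of Pauli `X`
(`s = false` the `+1`-eigenvector, `s = true` the `-1`-eigenvector). -/
def xVec (s : Bool) : Bool → ℂ :=
  fun c => ((Real.sqrt 2 : ℝ) : ℂ)⁻¹ * (if c && s then -1 else 1)

/-- The eigenvectors `|Y,±⟩ = (|0⟩ ± i|1⟩)/√2` of Pauli `Y`
(`s = false` the `+1`-eigenvector, `s = true` the `-1`-eigenvector). -/
def yVec (s : Bool) : Bool → ℂ :=
  fun c => ((Real.sqrt 2 : ℝ) : ℂ)⁻¹ *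
    (if c then (if s then -Complex.I else Complex.I) else 1)

/-- The rank-one projector `|v⟩⟨v|` on qubit `a` (identity elsewhere),
for a single-qubit vector `v`. -/
def projDir [DecidableEq V] (a : V) (v : Bool → ℂ) (ψ : QState V) : QState V :=
  fun x => v (x a) *
    (starRingEnd ℂ (v false) * ψ (Function.update x a false) +
      starRingEnd ℂ (v true) * ψ (Function.update x a true))

/-- The tensor product `|v⟩^{(a)} ⊗ |φ⟩` of a single-qubit state on qubit `a` with a state
on the remaining qubits. -/
def tensorQubit [DecidableEq V] (a : V) (v : Bool → ℂ) (φ : QState {u : V // u ≠ a}) :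
    QState V :=
  fun x => v (x a) * φ (fun u => x u.1)

/-- Apply a single-qubit gate with matrix entries `m r c = ⟨r|M|c⟩` on qubit `a`. -/
def applyGate [DecidableEq V] (a : V) (m : Bool → Bool → ℂ) (ψ : QState V) : QState V :=
  fun x => m (x a) false * ψ (Function.update x a false) +
    m (x a) true * ψ (Function.update x a true)

/-- The square roots `√(±iY) = (I ± iY)/√2`
(`s = false` for `√(+iY)`, `s = true` for `√(-iY)`). -/
def sqrtiY (s : Bool) : Bool → Bool → ℂ :=
  fun r c => ((Real.sqrt 2 : ℝ) : ℂ)⁻¹ *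
    (if s then (if r = false ∧ c = true then -1 else 1)
     else (if r = true ∧ c = false then -1 else 1))

/-- The Hadamard gate. -/
def hadamard : Bool → Bool → ℂ :=
  fun r c => ((Real.sqrt 2 : ℝ) : ℂ)⁻¹ * (if r && c then -1 else 1)

/-- Apply a tensor product of single-qubit gates, one on each qubit. -/
def applyLocal [Fintype V] [DecidableEq V] (u : V → Bool → Bool → ℂ) (ψ : QState V) :
    QState V :=
  fun x => ∑ y : V → Bool, (∏ v, u v (x v) (y v)) * ψ y

/-- `2×2` matrix multiplication (matrices as `Bool → Bool → ℂ`). -/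
def matMul2 (a b : Bool → Bool → ℂ) : Bool → Bool → ℂ :=
  fun r c => ∑ k : Bool, a r k * b k c

/-- Adjoint of a `2×2` matrix. -/
def matAdj2 (a : Bool → Bool → ℂ) : Bool → Bool → ℂ := fun r c => starRingEnd ℂ (a c r)

def idMat : Bool → Bool → ℂ := fun r c => if r = c then 1 else 0
def xMat : Bool → Bool → ℂ := fun r c => if r = c then 0 else 1
def yMat : Bool → Bool → ℂ := fun r c => if r = c then 0 else if r then Complex.I else -Complex.I
def zMat : Bool → Bool → ℂ := fun r c => if r = c then (if r then -1 else 1) else 0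

/-- A `2×2` matrix is unitary. -/
def IsUnitary2 (u : Bool → Bool → ℂ) : Prop := matMul2 (matAdj2 u) u = idMat

/-- A single-qubit Clifford unitary: a unitary conjugating `X` and `Z` into
`i^k·P` with `P` a Pauli matrix. -/
def IsClifford1 (u : Bool → Bool → ℂ) : Prop :=
  IsUnitary2 u ∧
    (∃ (k : ℕ) (P : Bool → Bool → ℂ), P ∈ ({idMat, xMat, yMat, zMat} : Set _) ∧
      matMul2 (matMul2 u xMat) (matAdj2 u) = Complex.I ^ k • P) ∧
    (∃ (k : ℕ) (P : Bool → Bool → ℂ), P ∈ ({idMat, xMat, yMat, zMat} : Set _) ∧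
      matMul2 (matMul2 u zMat) (matAdj2 u) = Complex.I ^ k • P)

/-- The action of the `n`-qubit Pauli operator `c · ⨂_v X^{xv v} Z^{zv v}`. -/
def pauliAction [Fintype V] (c : ℂ) (xv zv : V → Bool) (ψ : QState V) : QState V :=
  fun s => c * (∏ v, if zv v && (xor (s v) (xv v)) then (-1 : ℂ) else 1) *
    ψ (fun v => xor (s v) (xv v))

/-- The outer product `|ψ⟩⟨φ|` as a matrix on configurations. -/
def outer (ψ φ : QState V) : (V → Bool) → (V → Bool) → ℂ :=
  fun x y => ψ x * starRingEnd ℂ (φ y)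

open Classical in
/-- Partial trace keeping the qubits that satisfy `P` (tracing out the others). -/
def ptraceKeep [Fintype V] [DecidableEq V] (P : V → Prop)
    (ρ : (V → Bool) → (V → Bool) → ℂ) :
    ({v : V // P v} → Bool) → ({v : V // P v} → Bool) → ℂ :=
  fun x y => ∑ z : {v : V // ¬ P v} → Bool,
    ρ (fun w => if h : P w then x ⟨w, h⟩ else z ⟨w, h⟩)
      (fun w => if h : P w then y ⟨w, h⟩ else z ⟨w, h⟩)

open Classical in
/-- Apply a product of single-qubit bras `⟨bra v|` to each qubit `v` satisfying `P`,
leaving a state on the remaining qubits. -/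
def applyBras [Fintype V] [DecidableEq V] (P : V → Prop) (bra : V → Bool → ℂ)
    (ψ : QState V) : QState {v : V // ¬ P v} :=
  fun x => ∑ z : {v : V // P v} → Bool,
    (∏ v : {v : V // P v}, bra v.1 (z v)) *
      ψ (fun w => if h : P w then z ⟨w, h⟩ else x ⟨w, h⟩)

/-- A density operator: hermitian, trace one, positive semidefinite. -/
def IsDensityOp {α : Type*} [Fintype α] [DecidableEq α]
    (ρ : (α → Bool) → (α → Bool) → ℂ) : Prop :=
  (∀ x y, starRingEnd ℂ (ρ y x) = ρ x y) ∧ (∑ x, ρ x x = 1) ∧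
    ∀ ψ : (α → Bool) → ℂ, ∃ r : ℝ, 0 ≤ r ∧
      (∑ x, ∑ y, starRingEnd ℂ (ψ x) * ρ x y * ψ y) = (r : ℂ)

open Classical in
/-- Separability of an operator on the qubits indexed by `α` with respect to the
bipartition `(A, Aᶜ)`: a finite convex combination of tensor products of density
operators. -/
def SeparableWrt {α : Type*} [Fintype α] [DecidableEq α] (A : Set α)
    (ρ : (α → Bool) → (α → Bool) → ℂ) : Prop :=
  ∃ (k : ℕ) (p : Fin k → ℝ)
    (σ : Fin k → ({a : α // a ∈ A} → Bool) → ({a : α // a ∈ A} → Bool) → ℂ)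
    (τ : Fin k → ({a : α // a ∉ A} → Bool) → ({a : α // a ∉ A} → Bool) → ℂ),
    (∀ i, 0 ≤ p i) ∧ (∑ i, p i = 1) ∧
    (∀ i, IsDensityOp (σ i)) ∧ (∀ i, IsDensityOp (τ i)) ∧
    ∀ x y, ρ x y = ∑ i, (p i : ℂ) *
      (σ i (fun a => x a.1) (fun a => y a.1) * τ i (fun a => x a.1) (fun a => y a.1))


instance {α : Type*} [DecidableEq α] (r : α → α → Prop) [DecidableRel r] :
    DecidableRel (SimpleGraph.fromRel r).Adj := fun a b =>
  inferInstanceAs (Decidable (a ≠ b ∧ (r a b ∨ r b a)))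

/-- The line graph on `{1, …, n}` (as `Fin n`) with edges between consecutive vertices. -/
def lineGraph (n : ℕ) : SimpleGraph (Fin n) :=
  SimpleGraph.fromRel (fun i j => (i : ℕ) + 1 = (j : ℕ))

instance (n : ℕ) : DecidableRel (lineGraph n).Adj := fun a b =>
  inferInstanceAs (Decidable (a ≠ b ∧ ((a : ℕ) + 1 = (b : ℕ) ∨ (b : ℕ) + 1 = (a : ℕ))))

/-- The extension `I_R ⊗ s` of an operator `s` on `n` qubits by the identity on an extra
reference qubit labelled `0`. -/
def liftOp {n : ℕ} (s : QState (Fin n) → QState (Fin n)) (ψ : QState (Fin (n + 1))) :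
    QState (Fin (n + 1)) :=
  fun x => s (fun y => ψ (Fin.cons (x 0) y)) (fun k => x k.succ)

end


/-! Split a configuration of `V` as `(x, z)` with `x` on `W` and `z` off `W`. The amplitude of
`|G⟩` is a product of edge signs. The edges inside `W` give the amplitude of `G[W]`, and splitting
those at `u` gives `|0⟩|G[W∖u]⟩ + |1⟩ Z_{N_u} |G[W∖u]⟩`; by the cut hypothesis every other edge
sees `x` only through `x_u`. Hence `⟨x, z|G⟩ = Ψ_{x_u}(x) g(x_u, z)`, and summing out `z` in the
reduced operator leaves `(ρ φ)(x) = D(x_u) Ψ_{x_u}(x)`. -/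

section GraphStateSplitting

variable {V : Type*}

open Classical in
noncomputable def joinConfig (P : V → Prop) (x : {v // P v} → Bool) (z : {v // ¬ P v} → Bool) :
    V → Bool :=
  fun w => if h : P w then x ⟨w, h⟩ else z ⟨w, h⟩

def graphSign [Fintype V] [DecidableEq V] (G : SimpleGraph V) [DecidableRel G.Adj]
    (s : V → Bool) : ℂ :=
  ∏ e ∈ G.edgeFinset, edgeSign s e

theorem graphState_apply [Fintype V] [DecidableEq V] (G : SimpleGraph V) [DecidableRel G.Adj]
    (s : V → Bool) :
    graphState G s = ((Real.sqrt 2 : ℝ) : ℂ)⁻¹ ^ Fintype.card V * graphSign G s :=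
  rfl

theorem edgeSign_mk (s : V → Bool) (a b : V) :
    edgeSign s s(a, b) = if s a && s b then (-1 : ℂ) else 1 :=
  rfl

theorem edgeSign_congr {s t : V → Bool} (e : Sym2 V) (h : ∀ v ∈ e, s v = t v) :
    edgeSign s e = edgeSign t e := by
  induction e using Sym2.ind with
  | _ a b => rw [edgeSign_mk, edgeSign_mk, h a (by simp), h b (by simp)]

theorem graphSign_inducedSub [Fintype V] [DecidableEq V] (G : SimpleGraph V)
    [DecidableRel G.Adj] (P : V → Prop) [DecidablePred P] (s : V → Bool) :
    graphSign (inducedSub G P) (fun t => s t.1)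
      = ∏ e ∈ G.edgeFinset.filter (fun e => ∀ v ∈ e, P v), edgeSign s e := by
  refine Finset.prod_bij (fun e _ => Sym2.map Subtype.val e) ?_
    (fun _ _ _ _ h => Sym2.map.injective Subtype.val_injective h) ?_
    (fun e _ => by induction e using Sym2.ind; rfl)
  · intro e he
    induction e using Sym2.ind with
    | _ a b =>
      rw [SimpleGraph.mem_edgeFinset] at he
      simpa [inducedSub, a.2, b.2] using he
  · intro e he
    induction e using Sym2.ind with
    | _ a b =>
      simp only [Finset.mem_filter, SimpleGraph.mem_edgeFinset, SimpleGraph.mem_edgeSet,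
        Sym2.mem_iff, forall_eq_or_imp, forall_eq] at he
      exact ⟨s(⟨a, he.2.1⟩, ⟨b, he.2.2⟩), by rw [SimpleGraph.mem_edgeFinset]; exact he.1, rfl⟩

theorem graphSign_eq_inducedSub_mul [Fintype V] [DecidableEq V] (G : SimpleGraph V)
    [DecidableRel G.Adj] (P : V → Prop) [DecidablePred P] (s : V → Bool) :
    graphSign G s = graphSign (inducedSub G P) (fun t => s t.1) *
      ∏ e ∈ G.edgeFinset.filter (fun e => ¬ ∀ v ∈ e, P v), edgeSign s e := by
  rw [graphSign_inducedSub, graphSign, Finset.prod_filter_mul_prod_filter_not]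

theorem prod_edgeSign_incident [Fintype V] [DecidableEq V] (G : SimpleGraph V)
    [DecidableRel G.Adj] (a : V) (s : V → Bool) :
    ∏ e ∈ G.edgeFinset.filter (a ∈ ·), edgeSign s e
      = if s a then ∏ t ∈ Finset.univ.filter (fun t : {t // t ≠ a} => G.Adj a t),
          (if s t then (-1 : ℂ) else 1) else 1 := by
  have hstar : ∏ e ∈ G.edgeFinset.filter (a ∈ ·), edgeSign s e
      = ∏ t ∈ Finset.univ.filter (fun t : {t // t ≠ a} => G.Adj a t), edgeSign s s(a, t) := by
    refine (Finset.prod_bij (fun t _ => s(a, t.1)) ?_ ?_ ?_ (fun _ _ => rfl)).symm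
    · intro t ht
      simpa [SimpleGraph.mem_edgeFinset] using ht
    · intro t₁ _ t₂ _ h
      exact Subtype.ext (Sym2.congr_right.mp h)
    · intro e he
      induction e using Sym2.ind with
      | _ x y =>
        simp only [Finset.mem_filter, SimpleGraph.mem_edgeFinset, SimpleGraph.mem_edgeSet,
          Sym2.mem_iff] at he
        obtain ⟨hxy, rfl | rfl⟩ := he
        · exact ⟨⟨y, hxy.ne.symm⟩, by simpa using hxy, rfl⟩
        · exact ⟨⟨x, hxy.ne⟩, by simpa using hxy.symm, Sym2.eq_swap⟩
  rw [hstar]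
  cases h : s a <;> simp [edgeSign_mk, h]

theorem graphSign_eq_incident_mul_inducedSub [Fintype V] [DecidableEq V] (G : SimpleGraph V)
    [DecidableRel G.Adj] (a : V) (s : V → Bool) :
    graphSign G s = (if s a then ∏ t ∈ Finset.univ.filter (fun t : {t // t ≠ a} => G.Adj a t),
          (if s t then (-1 : ℂ) else 1) else 1) *
        graphSign (inducedSub G (· ≠ a)) (fun t => s t.1) := by
  rw [graphSign_inducedSub, ← prod_edgeSign_incident, graphSign,
    ← Finset.prod_filter_mul_prod_filter_not G.edgeFinset (a ∈ ·)]
  congr 1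
  refine Finset.prod_congr (Finset.filter_congr fun e _ => ?_) fun _ _ => rfl
  exact ⟨fun h v hv hva => h (hva ▸ hv), fun h ha => h a ha rfl⟩

theorem joinConfig_restrict (P : V → Prop) (x : {v // P v} → Bool) (z : {v // ¬ P v} → Bool) :
    (fun t : {v // P v} => joinConfig P x z t.1) = x :=
  funext fun t => by simp [joinConfig, t.2]

open Classical in
theorem prod_edgeSign_leaving_congr [Fintype V] [DecidableEq V] (G : SimpleGraph V)
    [DecidableRel G.Adj] (W : Set V) (u : V) (hu : u ∈ W)
    (hcut : ∀ x y : V, G.Adj x y → x ∈ W → y ∉ W → x = u)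
    {x x' : {v // v ∈ W} → Bool} (hx : x ⟨u, hu⟩ = x' ⟨u, hu⟩) (z : {v // v ∉ W} → Bool) :
    ∏ e ∈ G.edgeFinset.filter (fun e => ¬ ∀ v ∈ e, v ∈ W), edgeSign (joinConfig (· ∈ W) x z) e
      = ∏ e ∈ G.edgeFinset.filter (fun e => ¬ ∀ v ∈ e, v ∈ W),
          edgeSign (joinConfig (· ∈ W) x' z) e := by
  refine Finset.prod_congr rfl fun e he => ?_
  induction e using Sym2.ind with
  | _ a b =>
    simp only [Finset.mem_filter, SimpleGraph.mem_edgeFinset, SimpleGraph.mem_edgeSet,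
      Sym2.mem_iff, forall_eq_or_imp, forall_eq, not_and_or] at he
    obtain ⟨hab, hout⟩ := he
    refine edgeSign_congr _ fun v hv => ?_
    by_cases hvW : v ∈ W
    · have hvu : v = u := by
        rcases Sym2.mem_iff.mp hv with rfl | rfl
        · exact hcut v b hab hvW (hout.resolve_left (not_not.mpr hvW))
        · exact hcut v a hab.symm hvW (hout.resolve_right (not_not.mpr hvW))
      subst hvu
      simpa [joinConfig, hvW] using hx
    · simp [joinConfig, hvW]

open Classical in
theorem exists_graphState_joinConfig_eq_mul [Fintype V] [DecidableEq V] (G : SimpleGraph V)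
    [DecidableRel G.Adj] (W : Set V) (u : V) (hu : u ∈ W)
    (hcut : ∀ x y : V, G.Adj x y → x ∈ W → y ∉ W → x = u) :
    ∃ g : Bool → ({v // v ∉ W} → Bool) → ℂ, ∀ x z,
      graphState G (joinConfig (· ∈ W) x z)
        = (if x ⟨u, hu⟩ then
            pauliZProd
              (Finset.univ.filter
                (fun w : {t : {v : V // v ∈ W} // t ≠ ⟨u, hu⟩} => G.Adj u w.1.1))
              (graphState (inducedSub (inducedSub G (· ∈ W)) (· ≠ ⟨u, hu⟩)))
          else graphState (inducedSub (inducedSub G (· ∈ W)) (· ≠ ⟨u, hu⟩)))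
            (fun t => x t.1) * g (x ⟨u, hu⟩) z := by
  set u' : {v // v ∈ W} := ⟨u, hu⟩
  set N := Finset.univ.filter (fun w : {t : {v : V // v ∈ W} // t ≠ u'} => G.Adj u w.1.1)
  set c : ℂ := ((Real.sqrt 2 : ℝ) : ℂ)⁻¹ with hc_def
  have hc : c ≠ 0 := by simp [c]
  -- the leaving edges see `x` only at `u`, so any configuration agreeing with `x` there will do
  refine ⟨fun b z => c ^ Fintype.card V / c ^ Fintype.card {t // t ≠ u'} *
    ∏ e ∈ G.edgeFinset.filter (fun e => ¬ ∀ v ∈ e, v ∈ W),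
      edgeSign (joinConfig (· ∈ W) (Function.update (fun _ => false) u' b) z) e,
    fun x z => ?_⟩
  have hN : Finset.univ.filter (fun t : {t // t ≠ u'} => (inducedSub G (· ∈ W)).Adj u' t) = N :=
    rfl
  rw [graphState_apply, graphSign_eq_inducedSub_mul G (· ∈ W), joinConfig_restrict,
    graphSign_eq_incident_mul_inducedSub _ u', hN,
    prod_edgeSign_leaving_congr G W u hu hcut (x' := Function.update (fun _ => false) u' (x u'))
      (by simp [u']) z]
  cases x u' <;> simp only [pauliZProd, graphState_apply, if_true, if_false,
    Bool.false_eq_true, ← hc_def] <;> field_simp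

open Classical in
theorem exists_ptraceKeep_outer_mulVec_eq [Fintype V] [DecidableEq V] {P : V → Prop}
    {β : Type*} (ψ : QState V) (F : ({v // P v} → Bool) → ℂ) (k : ({v // P v} → Bool) → β)
    (g : β → ({v // ¬ P v} → Bool) → ℂ) (hψ : ∀ x z, ψ (joinConfig P x z) = F x * g (k x) z)
    (φ : QState {v // P v}) :
    ∃ D : β → ℂ, (fun x => ∑ y, ptraceKeep P (outer ψ ψ) x y * φ y) = fun x => D (k x) * F x := by
  refine ⟨fun b => ∑ z, g b z * ∑ y, starRingEnd ℂ (ψ (joinConfig P y z)) * φ y,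
    funext fun x => ?_⟩
  change ∑ y, (∑ z, ψ (joinConfig P x z) * starRingEnd ℂ (ψ (joinConfig P y z))) * φ y = _
  simp only [hψ x, Finset.sum_mul, Finset.mul_sum]
  rw [Finset.sum_comm]
  exact Finset.sum_congr rfl fun z _ => Finset.sum_congr rfl fun y _ => by ring

theorem mem_span_tensorQubit_zVec [DecidableEq V] (a : V) (Ψ₀ Ψ₁ : QState {t // t ≠ a})
    (D : Bool → ℂ) :
    (fun x => D (x a) * (if x a then Ψ₁ else Ψ₀) (fun t => x t.1)) ∈
      Submodule.span ℂ {tensorQubit a (zVec false) Ψ₀, tensorQubit a (zVec true) Ψ₁} := by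
  rw [Submodule.mem_span_pair]
  exact ⟨D false, D true, funext fun x => by cases h : x a <;> simp [tensorQubit, zVec, h]⟩

end GraphStateSplitting

open Classical in
/-- If every edge of `G` from `W` to its complement is incident to
`u ∈ W`, then the reduced state `Tr_{V∖W}(|G⟩⟨G|)` has rank at most 2: its range is
contained in the span of `|0⟩^{(u)} ⊗ |G[W∖{u}]⟩` and
`|1⟩^{(u)} ⊗ (⨂_{b∈N_u∩W} Z^{(b)}) |G[W∖{u}]⟩`. -/
theorem stmt13 {V : Type*} [Fintype V] [DecidableEq V]
    (G : SimpleGraph V) [DecidableRel G.Adj] (W : Set V) (u : V) (hu : u ∈ W)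
    (hcut : ∀ x y : V, G.Adj x y → x ∈ W → y ∉ W → x = u) :
    ∀ φ : QState {v : V // v ∈ W},
      (fun x => ∑ y, ptraceKeep (· ∈ W) (outer (graphState G) (graphState G)) x y * φ y)
        ∈ Submodule.span ℂ
          ({tensorQubit (⟨u, hu⟩ : {v : V // v ∈ W}) (zVec false)
              (graphState (inducedSub (inducedSub G (· ∈ W)) (· ≠ ⟨u, hu⟩))),
            tensorQubit (⟨u, hu⟩ : {v : V // v ∈ W}) (zVec true)
              (pauliZProd
                (Finset.univ.filter
                  (fun w : {t : {v : V // v ∈ W} // t ≠ ⟨u, hu⟩} => G.Adj u w.1.1))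
                (graphState (inducedSub (inducedSub G (· ∈ W)) (· ≠ ⟨u, hu⟩))))} :
            Set (QState {v : V // v ∈ W})) := by
  intro φ
  obtain ⟨g, hg⟩ := exists_graphState_joinConfig_eq_mul G W u hu hcut
  obtain ⟨D, hD⟩ := exists_ptraceKeep_outer_mulVec_eq _ _ (fun x => x ⟨u, hu⟩) g hg φ
  rw [hD]
  exact mem_span_tensorQubit_zVec _ _ _ D
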